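/- arXiv:1707.06584 — 2 statements merged into one kernel-verified Lean document; each statement's English description precedes it below -/
import Mathlib

section
/- Let {M_t}_{t≥0} be a semigroup of unital, self-adjoint (M_t† = M_t), positive, trace-preserving linear maps on matrices, with M_s ∘ M_t = M_{s+t}. For ρ_0 > 0 a density matrix with ρ_t := M_t(ρ_0) > 0 for all t, the entropy at time t satisfies −Tr(ρ_0 log ρ_{2t}) ≤ S(ρ_t) ≤ −Tr(ρ_{2t} log ρ_0). -/
open scoped Matrix Kronecker ComplexOrder

open Matrix in
noncomputable def matFun {n : Type*} [Fintype n] [DecidableEq n]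
    (f : ℝ → ℝ) (A : Matrix n n ℂ) : Matrix n n ℂ :=
  if hA : A.IsHermitian then
    (hA.eigenvectorUnitary : Matrix n n ℂ) *
      Matrix.diagonal (fun i => (f (hA.eigenvalues i) : ℂ)) *
      star (hA.eigenvectorUnitary : Matrix n n ℂ)
  else 0

noncomputable def matLog {n : Type*} [Fintype n] [DecidableEq n]
    (A : Matrix n n ℂ) : Matrix n n ℂ := matFun Real.log A

noncomputable def vnEntropy {n : Type*} [Fintype n] [DecidableEq n]
    (ρ : Matrix n n ℂ) : ℝ := -(Matrix.trace (ρ * matLog ρ)).re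

noncomputable def relEnt {n : Type*} [Fintype n] [DecidableEq n]
    (ρ σ : Matrix n n ℂ) : ℝ := (Matrix.trace (ρ * (matLog ρ - matLog σ))).re

noncomputable def matAbs {m n : Type*} [Fintype m] [Fintype n] [DecidableEq n]
    (A : Matrix m n ℂ) : Matrix n n ℂ := matFun Real.sqrt (Aᴴ * A)

noncomputable def traceNorm {m n : Type*} [Fintype m] [Fintype n] [DecidableEq n]
    (A : Matrix m n ℂ) : ℝ := (Matrix.trace (matAbs A)).re

noncomputable def schattenNorm {m n : Type*} [Fintype m] [Fintype n] [DecidableEq n]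
    (p : ℝ) (A : Matrix m n ℂ) : ℝ :=
  (Matrix.trace (matFun (fun x => x ^ p) (matAbs A))).re ^ (1 / p)

noncomputable def specSup {n : Type*} [Fintype n] [DecidableEq n]
    (A : Matrix n n ℂ) : ℝ :=
  if hA : A.IsHermitian then sSup (Set.range hA.eigenvalues) else 0

noncomputable def opNorm {m n : Type*} [Fintype m] [Fintype n] [DecidableEq n]
    (A : Matrix m n ℂ) : ℝ := specSup (matAbs A)

/-!
Both bounds are instances of the operator inequality `Φ (log σ) ≤ log (Φ σ)` for the positive
unital map `Φ = M t`, paired with a density matrix under the trace and moved across it by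
self-adjointness: `σ = ρ_t` gives the lower bound (as `Φ ρ_t = ρ_{2t}`), `σ = ρ_0` the upper one.

The operator inequality is tested in each vector state `x`. Writing `σ = ∑ sᵢ Pᵢ` and
`Φ σ = ∑ νₖ Qₖ`, the weights `qᵢ = ⟪x, Φ Pᵢ x⟫` and `pₖ = ⟪x, Qₖ x⟫` are nonnegative with the
same total mass `‖x‖²`, and Choi's inequality `Φ (A)⁻¹ ≤ Φ (A⁻¹)` for `A = σ + l` says
`∑ pₖ / (νₖ + l) ≤ ∑ qᵢ / (sᵢ + l)` for every `l ≥ 0`. Since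
`log x = ∫₀^∞ ((1 + l)⁻¹ - (x + l)⁻¹) dl`, integrating over `l` gives `∑ qᵢ log sᵢ ≤ ∑ pₖ log νₖ`.
-/

section LogSums

open Filter Topology Real

lemma tendsto_log_add_sub_log (c : ℝ) :
    Tendsto (fun x => log (c + x) - log x) atTop (𝓝 0) := by
  have h : Tendsto (fun x : ℝ => 1 + c * x⁻¹) atTop (𝓝 1) := by
    simpa using tendsto_const_nhds.add (tendsto_inv_atTop_zero.const_mul c)
  have hlog := (continuousAt_log one_ne_zero).tendsto.comp h
  rw [log_one] at hlog
  refine hlog.congr' ?_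
  filter_upwards [eventually_gt_atTop 0, eventually_gt_atTop (-c)] with x hx hcx
  rw [Function.comp_apply, ← log_div (by linarith) hx.ne', add_div, div_self hx.ne', div_eq_mul_inv,
    add_comm]

lemma tendsto_sum_mul_log_add_sub {ι : Type*} [Fintype ι] (w a : ι → ℝ) :
    Tendsto (fun x => ∑ i, w i * log (a i + x) - (∑ i, w i) * log x) atTop (𝓝 0) := by
  have h := tendsto_finsetSum Finset.univ fun i _ =>
    (tendsto_log_add_sub_log (a i)).const_mul (w i)
  simp only [mul_zero, Finset.sum_const_zero] at h
  refine h.congr fun x => ?_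
  simp only [mul_sub, Finset.sum_sub_distrib, Finset.sum_mul]

lemma hasDerivAt_sum_mul_log_add {ι : Type*} [Fintype ι] (w a : ι → ℝ) {x : ℝ}
    (h : ∀ i, 0 < a i + x) :
    HasDerivAt (fun y => ∑ i, w i * log (a i + y)) (∑ i, w i * (a i + x)⁻¹) x := by
  refine HasDerivAt.fun_sum fun i _ => ?_
  simpa using (((hasDerivAt_id x).const_add (a i)).log (h i).ne').const_mul (w i)

theorem sum_mul_log_le_of_sum_mul_inv_add_le {ι κ : Type*} [Fintype ι] [Fintype κ]
    {s : ι → ℝ} {ν : κ → ℝ} {q : ι → ℝ} {p : κ → ℝ} (hs : ∀ i, 0 < s i) (hν : ∀ k, 0 < ν k)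
    (hsum : ∑ i, q i = ∑ k, p k)
    (hres : ∀ l, 0 ≤ l → ∑ k, p k * (ν k + l)⁻¹ ≤ ∑ i, q i * (s i + l)⁻¹) :
    ∑ i, q i * log (s i) ≤ ∑ k, p k * log (ν k) := by
  set G := fun x => ∑ i, q i * log (s i + x) - ∑ k, p k * log (ν k + x)
  have hG : ∀ x, 0 ≤ x →
      HasDerivAt G (∑ i, q i * (s i + x)⁻¹ - ∑ k, p k * (ν k + x)⁻¹) x := fun x hx =>
    (hasDerivAt_sum_mul_log_add q s fun i => by linarith [hs i]).sub
      (hasDerivAt_sum_mul_log_add p ν fun k => by linarith [hν k])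
  have hmono : MonotoneOn G (Set.Ici 0) :=
    monotoneOn_of_hasDerivWithinAt_nonneg (convex_Ici 0)
      (fun x hx => (hG x hx).continuousAt.continuousWithinAt)
      (fun x hx => (hG x (interior_subset hx)).hasDerivWithinAt)
      fun x hx => sub_nonneg.2 (hres x (interior_subset hx))
  have hlim : Tendsto G atTop (𝓝 0) := by
    have h := (tendsto_sum_mul_log_add_sub q s).sub (tendsto_sum_mul_log_add_sub p ν)
    rw [sub_zero, hsum] at h
    exact h.congr fun x => by simp only [G]; ring
  have hG0 : G 0 ≤ 0 :=
    ge_of_tendsto hlim (eventually_ge_atTop 0 |>.mono fun x hx => hmono Set.self_mem_Ici hx hx)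
  simpa [G] using hG0

end LogSums

namespace Matrix

open scoped MatrixOrder in
lemma PosSemidef.trace_mul_nonneg {𝕜 n : Type*} [RCLike 𝕜] [Fintype n] {ρ C : Matrix n n 𝕜}
    (hρ : ρ.PosSemidef) (hC : C.PosSemidef) : 0 ≤ (ρ * C).trace := by
  classical
  obtain ⟨B, rfl⟩ := CStarAlgebra.nonneg_iff_eq_star_mul_self.mp hρ.nonneg
  rw [star_eq_conjTranspose, Matrix.mul_assoc, trace_mul_comm]
  exact (hC.mul_mul_conjTranspose_same B).trace_nonneg

section QuadForm

variable {n : Type*} [Fintype n]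

noncomputable def reQuadForm (x : n → ℂ) : Matrix n n ℂ →ₗ[ℝ] ℝ where
  toFun C := (star x ⬝ᵥ C *ᵥ x).re
  map_add' C D := by simp [add_mulVec, dotProduct_add]
  map_smul' r C := by simp [smul_mulVec, dotProduct_smul]

lemma PosSemidef.reQuadForm_nonneg {C : Matrix n n ℂ} (hC : C.PosSemidef) (x : n → ℂ) :
    0 ≤ reQuadForm x C :=
  hC.re_dotProduct_nonneg x

lemma IsHermitian.posSemidef_of_reQuadForm_nonneg {C : Matrix n n ℂ} (hC : C.IsHermitian)
    (h : ∀ x, 0 ≤ reQuadForm x C) : C.PosSemidef :=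
  posSemidef_iff_dotProduct_mulVec.2 ⟨hC, fun x =>
    Complex.nonneg_iff.2 ⟨h x, (hC.im_star_dotProduct_mulVec_self x).symm⟩⟩

end QuadForm

variable {n : Type*} [Fintype n] [DecidableEq n] {A : Matrix n n ℂ}

lemma matFun_eq_cfc (f : ℝ → ℝ) (hA : A.IsHermitian) : matFun f A = cfc f A := by
  rw [matFun, dif_pos hA, hA.cfc_eq, IsHermitian.cfc, Unitary.conjStarAlgAut_apply]
  rfl

namespace IsHermitian

noncomputable def spectralProj (hA : A.IsHermitian) (i : n) : Matrix n n ℂ :=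
  (hA.eigenvectorUnitary : Matrix n n ℂ) * diagonal (Pi.single i 1) *
    star (hA.eigenvectorUnitary : Matrix n n ℂ)

lemma spectralProj_posSemidef (hA : A.IsHermitian) (i : n) : (hA.spectralProj i).PosSemidef := by
  have hd : (diagonal (Pi.single i (1 : ℂ))).PosSemidef :=
    PosSemidef.diagonal fun j => by rcases eq_or_ne j i with rfl | h <;> simp [*]
  simpa [spectralProj, star_eq_conjTranspose] using
    hd.mul_mul_conjTranspose_same (hA.eigenvectorUnitary : Matrix n n ℂ)

lemma cfc_eq_sum_smul_spectralProj (hA : A.IsHermitian) (f : ℝ → ℝ) :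
    cfc f A = ∑ i, f (hA.eigenvalues i) • hA.spectralProj i := by
  have hdiag : diagonal (fun i => (f (hA.eigenvalues i) : ℂ)) =
      ∑ i, f (hA.eigenvalues i) • diagonal (Pi.single i 1) := by
    ext a b
    rcases eq_or_ne a b with rfl | h <;> simp [Matrix.sum_apply, Pi.single_apply, *]
  simp only [← matFun_eq_cfc f hA, matFun, dif_pos hA, hdiag, spectralProj, Finset.mul_sum,
    Finset.sum_mul, Matrix.mul_smul, Matrix.smul_mul]

lemma sum_spectralProj (hA : A.IsHermitian) : ∑ i, hA.spectralProj i = 1 := by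
  simpa [cfc_const_one ℝ A hA.isSelfAdjoint] using
    (hA.cfc_eq_sum_smul_spectralProj fun _ => 1).symm

lemma eq_sum_smul_spectralProj (hA : A.IsHermitian) :
    A = ∑ i, hA.eigenvalues i • hA.spectralProj i := by
  simpa [cfc_id ℝ A hA.isSelfAdjoint] using hA.cfc_eq_sum_smul_spectralProj id

lemma map_cfc_eq_sum (hA : A.IsHermitian) (L : Matrix n n ℂ →ₗ[ℝ] ℝ) (f : ℝ → ℝ) :
    L (cfc f A) = ∑ i, L (hA.spectralProj i) * f (hA.eigenvalues i) := by
  simp only [hA.cfc_eq_sum_smul_spectralProj, map_sum, map_smul, smul_eq_mul, mul_comm]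

lemma map_of_posSemidef (hA : A.IsHermitian) {Φ : Matrix n n ℂ →ₗ[ℂ] Matrix n n ℂ}
    (hΦ : ∀ A, A.PosSemidef → (Φ A).PosSemidef) : (Φ A).IsHermitian := by
  rw [hA.eq_sum_smul_spectralProj, map_sum]
  refine isSelfAdjoint_sum _ fun i _ => ?_
  rw [LinearMap.map_smul_of_tower]
  exact .smul (.all _) (hΦ _ (hA.spectralProj_posSemidef i)).1

end IsHermitian

namespace PosDef

lemma map_of_posSemidef (hA : A.PosDef) {Φ : Matrix n n ℂ →ₗ[ℂ] Matrix n n ℂ}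
    (hΦ : ∀ A, A.PosSemidef → (Φ A).PosSemidef) (hΦ1 : Φ 1 = 1) : (Φ A).PosDef := by
  cases isEmpty_or_nonempty n
  · exact Subsingleton.elim A (Φ A) ▸ hA
  obtain ⟨i₀, hi₀⟩ := Finite.exists_min hA.1.eigenvalues
  set c := hA.1.eigenvalues i₀
  have hT : ∑ i, Φ (hA.1.spectralProj i) = 1 := by rw [← map_sum, hA.1.sum_spectralProj, hΦ1]
  have hsplit : Φ A = c • (1 : Matrix n n ℂ) +
      ∑ i, (hA.1.eigenvalues i - c) • Φ (hA.1.spectralProj i) := by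
    simp only [sub_smul, Finset.sum_sub_distrib, ← Finset.smul_sum, hT]
    conv_lhs => rw [hA.1.eq_sum_smul_spectralProj]
    simp only [map_sum, LinearMap.map_smul_of_tower]
    abel
  rw [hsplit]
  refine (PosDef.one.smul (hA.eigenvalues_pos i₀)).add_posSemidef
    (posSemidef_sum _ fun i _ => ?_)
  exact (hΦ _ (hA.1.spectralProj_posSemidef i)).smul (sub_nonneg.2 (hi₀ i))

lemma inv_add_smul_one_eq_cfc (hA : A.PosDef) {l : ℝ} (hl : 0 ≤ l) :
    (A + l • 1)⁻¹ = cfc (fun v => (v + l)⁻¹) A := by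
  have hcont (f : ℝ → ℝ) : ContinuousOn f (spectrum ℝ A) :=
    (finite_real_spectrum (A := A)).continuousOn f
  refine inv_eq_left_inv ?_
  have hshift : A + l • 1 = cfc (· + l) A := by
    rw [cfc_add_const l (fun x => x) A (hcont _) hA.1.isSelfAdjoint,
      cfc_id' ℝ A hA.1.isSelfAdjoint, Algebra.algebraMap_eq_smul_one]
  rw [hshift, ← cfc_mul _ _ A (hcont _) (hcont _), ← cfc_one ℝ A hA.1.isSelfAdjoint]
  refine cfc_congr fun x hx => ?_
  rw [hA.1.spectrum_real_eq_range_eigenvalues] at hx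
  obtain ⟨i, rfl⟩ := hx
  have := hA.eigenvalues_pos i
  rw [Pi.one_apply, inv_mul_cancel₀ (by positivity)]

lemma inv_eq_cfc (hA : A.PosDef) : A⁻¹ = cfc (fun x : ℝ => x⁻¹) A := by
  simpa using hA.inv_add_smul_one_eq_cfc le_rfl

/-- Choi's inequality `Φ (A)⁻¹ ≤ Φ (A⁻¹)`. -/
theorem posSemidef_map_inv_sub_inv_map (hA : A.PosDef) {Φ : Matrix n n ℂ →ₗ[ℂ] Matrix n n ℂ}
    (hΦ : ∀ A, A.PosSemidef → (Φ A).PosSemidef) (hΦ1 : Φ 1 = 1) :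
    (Φ A⁻¹ - (Φ A)⁻¹).PosSemidef := by
  have hΦA := hA.map_of_posSemidef hΦ hΦ1
  set s := hA.1.eigenvalues
  set T := fun i => Φ (hA.1.spectralProj i)
  have hTpsd : ∀ i, (T i).PosSemidef := fun i => hΦ _ (hA.1.spectralProj_posSemidef i)
  have hT : ∑ i, T i = 1 := by rw [← hΦ1, ← map_sum, hA.1.sum_spectralProj]
  have hΦA_sum : Φ A = ∑ i, s i • T i := by
    conv_lhs => rw [hA.1.eq_sum_smul_spectralProj]
    simp only [map_sum, LinearMap.map_smul_of_tower, T, s]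
  have hΦAinv_sum : Φ A⁻¹ = ∑ i, (s i)⁻¹ • T i := by
    rw [hA.inv_eq_cfc, hA.1.cfc_eq_sum_smul_spectralProj]
    simp only [map_sum, LinearMap.map_smul_of_tower, T, s]
  set D := (Φ A)⁻¹
  have hDΦA : D * Φ A = 1 := nonsing_inv_mul _ ((isUnit_iff_isUnit_det _).mp hΦA.isUnit)
  have hDH : D.IsHermitian := hΦA.inv.1
  clear_value D T
  have hterm : ∀ i, (s i)⁻¹ • ((s i • D - 1) * T i * (s i • D - 1)ᴴ) =
      D * (s i • T i) * D - D * T i - T i * D + (s i)⁻¹ • T i := by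
    intro i
    have hs : s i ≠ 0 := (hA.eigenvalues_pos i).ne'
    rw [conjTranspose_sub, conjTranspose_smul, hDH.eq, star_trivial, conjTranspose_one]
    simp only [sub_mul, mul_sub, smul_mul_assoc, mul_smul_comm, Matrix.one_mul, Matrix.mul_one,
      smul_sub, smul_smul]
    match_scalars <;> field_simp
  have hsum : Φ A⁻¹ - D = ∑ i, (s i)⁻¹ • ((s i • D - 1) * T i * (s i • D - 1)ᴴ) := by
    simp only [hterm, Finset.sum_add_distrib, Finset.sum_sub_distrib, ← Finset.mul_sum,
      ← Finset.sum_mul, ← hΦA_sum, ← hΦAinv_sum, hT, hDΦA]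
    rw [Matrix.one_mul, Matrix.mul_one]
    abel
  rw [hsum]
  exact posSemidef_sum _ fun i _ =>
    ((hTpsd i).mul_mul_conjTranspose_same _).smul (inv_nonneg.2 (hA.eigenvalues_pos i).le)

theorem posSemidef_matLog_map_sub_map_matLog {σ : Matrix n n ℂ} (hσ : σ.PosDef)
    {Φ : Matrix n n ℂ →ₗ[ℂ] Matrix n n ℂ} (hΦ : ∀ A, A.PosSemidef → (Φ A).PosSemidef)
    (hΦ1 : Φ 1 = 1) : (matLog (Φ σ) - Φ (matLog σ)).PosSemidef := by
  have hΦσ := hσ.map_of_posSemidef hΦ hΦ1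
  rw [matLog, matLog, matFun_eq_cfc _ hσ.1, matFun_eq_cfc _ hΦσ.1]
  have hlogσ : (cfc Real.log σ).IsHermitian := cfc_predicate _ _
  refine (IsHermitian.sub (cfc_predicate _ _)
    (hlogσ.map_of_posSemidef hΦ)).posSemidef_of_reQuadForm_nonneg fun x => ?_
  set L := (reQuadForm x).comp (Φ.restrictScalars ℝ)
  rw [map_sub, sub_nonneg]
  change L (cfc Real.log σ) ≤ reQuadForm x (cfc Real.log (Φ σ))
  rw [hσ.1.map_cfc_eq_sum L, hΦσ.1.map_cfc_eq_sum (reQuadForm x)]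
  refine sum_mul_log_le_of_sum_mul_inv_add_le hσ.eigenvalues_pos hΦσ.eigenvalues_pos ?_
    fun l hl => ?_
  · rw [← map_sum, ← map_sum, hσ.1.sum_spectralProj, hΦσ.1.sum_spectralProj]
    simp [L, hΦ1]
  · have hσl : (σ + l • 1).PosDef := hσ.add_posSemidef (PosSemidef.one.smul hl)
    have hΦσl : Φ (σ + l • 1) = Φ σ + l • 1 := by
      rw [map_add, LinearMap.map_smul_of_tower, hΦ1]
    have hChoi := (hσl.posSemidef_map_inv_sub_inv_map hΦ hΦ1).reQuadForm_nonneg x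
    rw [hΦσl, hσ.inv_add_smul_one_eq_cfc hl, hΦσ.inv_add_smul_one_eq_cfc hl, map_sub,
      sub_nonneg] at hChoi
    rwa [← hσ.1.map_cfc_eq_sum L (fun v => (v + l)⁻¹),
      ← hΦσ.1.map_cfc_eq_sum (reQuadForm x) (fun v => (v + l)⁻¹)]

end PosDef

end Matrix

theorem re_trace_map_mul_matLog_le {n : Type*} [Fintype n] [DecidableEq n]
    {Φ : Matrix n n ℂ →ₗ[ℂ] Matrix n n ℂ} (hΦ : ∀ A, A.PosSemidef → (Φ A).PosSemidef)
    (hΦ1 : Φ 1 = 1) (hΦsa : ∀ X Y, (Yᴴ * Φ X).trace = ((Φ Y)ᴴ * X).trace)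
    {ρ σ : Matrix n n ℂ} (hρ : ρ.PosSemidef) (hσ : σ.PosDef) :
    (Φ ρ * matLog σ).trace.re ≤ (ρ * matLog (Φ σ)).trace.re := by
  have hmove : (Φ ρ * matLog σ).trace = (ρ * Φ (matLog σ)).trace := by
    rw [← (hΦ ρ hρ).1.eq, ← hΦsa, hρ.1.eq]
  have hgap := (Complex.nonneg_iff.1
    (hρ.trace_mul_nonneg (hσ.posSemidef_matLog_map_sub_map_matLog hΦ hΦ1))).1
  rw [Matrix.mul_sub, Matrix.trace_sub, Complex.sub_re, ← hmove] at hgap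
  linarith

theorem stmt_12_general {n : Type*} [Fintype n] [DecidableEq n]
    (M : ℝ → (Matrix n n ℂ →ₗ[ℂ] Matrix n n ℂ))
    (hsemi : ∀ s t : ℝ, 0 ≤ s → 0 ≤ t → (M s) ∘ₗ (M t) = M (s + t))
    (hunital : ∀ t : ℝ, 0 ≤ t → M t 1 = 1)
    (hsa : ∀ t : ℝ, 0 ≤ t → ∀ X Y : Matrix n n ℂ,
      Matrix.trace (Yᴴ * M t X) = Matrix.trace ((M t Y)ᴴ * X))
    (hpos : ∀ t : ℝ, 0 ≤ t → ∀ A : Matrix n n ℂ, A.PosSemidef → (M t A).PosSemidef)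
    (ρ0 : Matrix n n ℂ) (hρ0 : ρ0.PosDef)
    (t : ℝ) (ht : 0 ≤ t) :
    -(Matrix.trace (ρ0 * matLog (M (2 * t) ρ0))).re ≤ vnEntropy (M t ρ0) ∧
      vnEntropy (M t ρ0) ≤ -(Matrix.trace ((M (2 * t) ρ0) * matLog ρ0)).re := by
  have hρ2t : M t (M t ρ0) = M (2 * t) ρ0 := by
    rw [two_mul, ← hsemi t t ht ht, LinearMap.comp_apply]
  have hρt := hρ0.map_of_posSemidef (hpos t ht) (hunital t ht)
  have lower := re_trace_map_mul_matLog_le (hpos t ht) (hunital t ht) (hsa t ht)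
    hρ0.posSemidef hρt
  have upper := re_trace_map_mul_matLog_le (hpos t ht) (hunital t ht) (hsa t ht)
    hρt.posSemidef hρ0
  rw [hρ2t] at lower upper
  exact ⟨neg_le_neg lower, neg_le_neg upper⟩

theorem stmt_12 {n : Type*} [Fintype n] [DecidableEq n]
    (M : ℝ → (Matrix n n ℂ →ₗ[ℂ] Matrix n n ℂ))
    (hsemi : ∀ s t : ℝ, 0 ≤ s → 0 ≤ t → (M s) ∘ₗ (M t) = M (s + t))
    (hunital : ∀ t : ℝ, 0 ≤ t → M t 1 = 1)
    (hsa : ∀ t : ℝ, 0 ≤ t → ∀ X Y : Matrix n n ℂ,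
      Matrix.trace (Yᴴ * M t X) = Matrix.trace ((M t Y)ᴴ * X))
    (hpos : ∀ t : ℝ, 0 ≤ t → ∀ A : Matrix n n ℂ, A.PosSemidef → (M t A).PosSemidef)
    (hTP : ∀ t : ℝ, 0 ≤ t → ∀ A : Matrix n n ℂ, Matrix.trace (M t A) = Matrix.trace A)
    (ρ0 : Matrix n n ℂ) (hρ0 : ρ0.PosDef) (hρ01 : Matrix.trace ρ0 = 1)
    (hρt : ∀ t : ℝ, 0 ≤ t → (M t ρ0).PosDef)
    (t : ℝ) (ht : 0 ≤ t) :
    -(Matrix.trace (ρ0 * matLog (M (2 * t) ρ0))).re ≤ vnEntropy (M t ρ0) ∧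
      vnEntropy (M t ρ0) ≤ -(Matrix.trace ((M (2 * t) ρ0) * matLog ρ0)).re :=
  stmt_12_general M hsemi hunital hsa hpos ρ0 hρ0 t ht
end

section
/- If a quantum channel E on a system A can be simulated as E(ρ) = F(ρ ⊗ θ) for a fixed positive trace-preserving sub-unital interaction map F on the joint system AC and fixed density matrix θ on C, then for every density matrix ρ > 0 with all relevant operators positive definite, S(E(ρ)) − S(ρ) ≥ S(θ). -/
/-!
Diagonalise `ω = ∑ⱼ λⱼ uⱼ uⱼ*` and `Φ ω = ∑ᵢ μᵢ vᵢ vᵢ*`. Then `μ = D λ` with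
`Dᵢⱼ = ⟨vᵢ, Φ(uⱼ uⱼ*) vᵢ⟩ ≥ 0`; trace preservation makes every column of `D` sum to `1` and
sub-unitality makes every row sum to at most `1`. Since `η(t) = -t log t` is concave with
`η(0) = 0`, Jensen's inequality row by row gives `∑ⱼ η(λⱼ) ≤ ∑ᵢ η(μᵢ)`, i.e. `S(ω) ≤ S(Φ ω)`.
For `ω = ρ ⊗ θ`, whose spectrum is `{λᵢ κⱼ}`, the entropy is additive, `S(ρ ⊗ θ) = S(ρ) + S(θ)`.
-/

open scoped Matrix Kronecker ComplexOrder

open Matrix Unitary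

open Real in
lemma sum_mul_negMulLog_le_negMulLog_sum {ι : Type*} [Fintype ι] (w x : ι → ℝ)
    (hw : ∀ i, 0 ≤ w i) (hw1 : ∑ i, w i ≤ 1) (hx : ∀ i, 0 ≤ x i) :
    ∑ i, w i * negMulLog (x i) ≤ negMulLog (∑ i, w i * x i) := by
  -- Jensen for the weights `w` completed to a probability vector by the mass `1 - ∑ w` at `0`.
  let w' : Option ι → ℝ := fun o => o.elim (1 - ∑ i, w i) w
  let x' : Option ι → ℝ := fun o => o.elim 0 x
  have h := concaveOn_negMulLog.le_map_sum (t := Finset.univ) (w := w') (p := x')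
    (fun o _ => by cases o <;> simp [w', sub_nonneg.mpr hw1, hw _])
    (by simp [w', Fintype.sum_option])
    (fun o _ => by cases o <;> simp [x', hx _])
  simpa [w', x', Fintype.sum_option, smul_eq_mul] using h

open Real in
lemma sum_negMulLog_le_sum_negMulLog_mulVec {ι κ : Type*} [Fintype ι] [Fintype κ]
    (D : Matrix ι κ ℝ) (hD : ∀ i j, 0 ≤ D i j) (hcol : ∀ j, ∑ i, D i j = 1)
    (hrow : ∀ i, ∑ j, D i j ≤ 1) (x : κ → ℝ) (hx : ∀ j, 0 ≤ x j) :
    ∑ j, negMulLog (x j) ≤ ∑ i, negMulLog ((D *ᵥ x) i) :=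
  calc ∑ j, negMulLog (x j)
      = ∑ i, ∑ j, D i j * negMulLog (x j) := by
        simp_rw [Finset.sum_comm (γ := ι), ← Finset.sum_mul, hcol, one_mul]
    _ ≤ ∑ i, negMulLog ((D *ᵥ x) i) :=
        Finset.sum_le_sum fun i _ =>
          sum_mul_negMulLog_le_negMulLog_sum (D i) x (hD i) (hrow i) hx

open Real in
lemma sum_sum_negMulLog_mul {ι κ : Type*} [Fintype ι] [Fintype κ] {x : ι → ℝ} {y : κ → ℝ}
    (hx : ∑ i, x i = 1) (hy : ∑ j, y j = 1) :
    ∑ i, ∑ j, negMulLog (x i * y j) = ∑ i, negMulLog (x i) + ∑ j, negMulLog (y j) := by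
  simp_rw [negMulLog_mul, Finset.sum_add_distrib, ← Finset.sum_mul, ← Finset.mul_sum, hy,
    one_mul, ← Finset.sum_mul, hx, one_mul]

section Unitary

variable {n : Type*} [Fintype n] [DecidableEq n]

lemma trace_conjStarAlgAut (U : unitaryGroup n ℂ) (X : Matrix n n ℂ) :
    (conjStarAlgAut ℂ _ U X).trace = X.trace := by
  rw [conjStarAlgAut_apply, trace_mul_cycle, coe_star_mul_self, one_mul]

lemma Matrix.PosSemidef.conjStarAlgAut {X : Matrix n n ℂ} (hX : X.PosSemidef)
    (U : unitaryGroup n ℂ) : (conjStarAlgAut ℂ _ U X).PosSemidef := by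
  rw [conjStarAlgAut_apply, star_eq_conjTranspose]
  exact hX.mul_mul_conjTranspose_same _

end Unitary

namespace Matrix.IsHermitian

variable {n : Type*} [Fintype n] [DecidableEq n] {A : Matrix n n ℂ}

lemma matFun_eq_cfc (hA : A.IsHermitian) (f : ℝ → ℝ) : matFun f A = cfc f A := by
  rw [matFun, dif_pos hA, cfc_eq hA, IsHermitian.cfc, conjStarAlgAut_apply]
  rfl

lemma trace_cfc (hA : A.IsHermitian) (f : ℝ → ℝ) :
    (cfc f A).trace = ∑ i, (f (hA.eigenvalues i) : ℂ) := by
  rw [cfc_eq hA, IsHermitian.cfc, trace_conjStarAlgAut, trace_diagonal]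
  rfl

lemma vnEntropy_eq_sum_negMulLog (hA : A.IsHermitian) :
    vnEntropy A = ∑ i, Real.negMulLog (hA.eigenvalues i) := by
  have hfin : (spectrum ℝ A).Finite := finite_real_spectrum
  have hmul : A * cfc Real.log A = cfc (fun x => x * Real.log x) A := by
    rw [cfc_mul _ _ A (hfin.continuousOn _) (hfin.continuousOn _), cfc_id' ℝ A]
  rw [vnEntropy, matLog, matFun_eq_cfc hA, hmul, trace_cfc hA, Complex.re_sum,
    ← Finset.sum_neg_distrib]
  simp [Real.negMulLog, neg_mul]

open Polynomial in
lemma sum_comp_eigenvalues_eq (hA : A.IsHermitian) (U : unitaryGroup n ℂ) (d : n → ℝ)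
    (h : A = conjStarAlgAut ℂ _ U (diagonal (RCLike.ofReal ∘ d))) (g : ℝ → ℝ) :
    ∑ i, g (hA.eigenvalues i) = ∑ i, g (d i) := by
  have hchar : A.charpoly = ∏ i, (X - C (d i : ℂ)) := by
    rw [h, conjStarAlgAut_apply, charpoly_mul_comm, ← mul_assoc, coe_star_mul_self, one_mul,
      charpoly_diagonal]
    rfl
  have hroots := hA.roots_charpoly_eq_eigenvalues
  rw [hchar, roots_prod _ _ (by simp [Finset.prod_ne_zero_iff, X_sub_C_ne_zero])] at hroots
  simp only [roots_X_sub_C, Multiset.bind_singleton, Complex.coe_algebraMap,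
    Function.comp_apply] at hroots
  simpa [Multiset.map_map, Function.comp_def] using
    congrArg (fun s => (s.map (g ∘ RCLike.re)).sum) hroots.symm

lemma sum_eigenvalues_eq_one (hA : A.IsHermitian) (h1 : A.trace = 1) :
    ∑ i, hA.eigenvalues i = 1 := by
  simpa [h1] using (congrArg Complex.re hA.trace_eq_sum_eigenvalues).symm

end Matrix.IsHermitian

section TransitionMatrix

variable {n m : Type*} [Fintype n] [DecidableEq n] [Fintype m] [DecidableEq m]

/-- `transitionMatrix Φ U V i j = ⟨vᵢ, Φ(uⱼ uⱼ*) vᵢ⟩` for the columns `uⱼ` of `U` and `vᵢ`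
of `V`. -/
noncomputable def transitionMatrix (Φ : Matrix n n ℂ →ₗ[ℂ] Matrix m m ℂ)
    (U : unitaryGroup n ℂ) (V : unitaryGroup m ℂ) : Matrix m n ℝ :=
  Matrix.of fun i j =>
    (conjStarAlgAut ℂ _ (star V) (Φ (conjStarAlgAut ℂ _ U (single j j 1))) i i).re

variable (Φ : Matrix n n ℂ →ₗ[ℂ] Matrix m m ℂ) (U : unitaryGroup n ℂ) (V : unitaryGroup m ℂ)

lemma transitionMatrix_nonneg (hpos : ∀ ω, ω.PosSemidef → (Φ ω).PosSemidef) (i : m) (j : n) :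
    0 ≤ transitionMatrix Φ U V i j := by
  have hsingle : (single j j (1 : ℂ)).PosSemidef := by
    rw [← diagonal_single]
    exact PosSemidef.diagonal fun k => by by_cases hk : k = j <;> simp [hk]
  exact (Complex.nonneg_iff.mp
    ((hpos _ (hsingle.conjStarAlgAut U)).conjStarAlgAut (star V)).diag_nonneg).1

lemma sum_col_transitionMatrix (hTP : ∀ ω, (Φ ω).trace = ω.trace) (j : n) :
    ∑ i, transitionMatrix Φ U V i j = 1 :=
  calc ∑ i, transitionMatrix Φ U V i j
      = (conjStarAlgAut ℂ _ (star V) (Φ (conjStarAlgAut ℂ _ U (single j j 1)))).trace.re := by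
        simp [transitionMatrix, trace, Complex.re_sum]
    _ = 1 := by
        rw [trace_conjStarAlgAut, hTP, trace_conjStarAlgAut, trace_single_eq_same, Complex.one_re]

lemma sum_row_transitionMatrix_le (hsub : ((1 : Matrix m m ℂ) - Φ 1).PosSemidef) (i : m) :
    ∑ j, transitionMatrix Φ U V i j ≤ 1 := by
  have hunit : ∑ j, conjStarAlgAut ℂ _ U (single j j 1) = 1 := by
    rw [← map_sum, sum_single_one, map_one]
  have hrow : ∑ j, transitionMatrix Φ U V i j = (conjStarAlgAut ℂ _ (star V) (Φ 1) i i).re := by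
    rw [← hunit, map_sum, map_sum]
    simp [transitionMatrix, Matrix.sum_apply, Complex.re_sum]
  have hle := (Complex.nonneg_iff.mp ((hsub.conjStarAlgAut (star V)).diag_nonneg (i := i))).1
  rw [map_sub, map_one, Matrix.sub_apply, one_apply_eq, Complex.sub_re, Complex.one_re] at hle
  linarith

lemma re_conjStarAlgAut_map_conjStarAlgAut_diagonal_apply (x : n → ℝ) (i : m) :
    (conjStarAlgAut ℂ _ (star V) (Φ (conjStarAlgAut ℂ _ U (diagonal (RCLike.ofReal ∘ x)))) i i).re
      = (transitionMatrix Φ U V *ᵥ x) i := by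
  have hdiag : diagonal (RCLike.ofReal ∘ x) = ∑ j, (x j : ℂ) • single j j (1 : ℂ) := by
    simp [← sum_single_eq_diagonal, smul_single]
  simp only [hdiag, map_sum, map_smul, Matrix.sum_apply, Matrix.smul_apply, smul_eq_mul,
    Complex.re_sum, Complex.re_ofReal_mul]
  simp [transitionMatrix, mulVec, dotProduct, mul_comm]

end TransitionMatrix

theorem vnEntropy_le_vnEntropy_map {n m : Type*} [Fintype n] [DecidableEq n] [Fintype m]
    [DecidableEq m] (Φ : Matrix n n ℂ →ₗ[ℂ] Matrix m m ℂ)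
    (hpos : ∀ ω, ω.PosSemidef → (Φ ω).PosSemidef) (hTP : ∀ ω, (Φ ω).trace = ω.trace)
    (hsub : ((1 : Matrix m m ℂ) - Φ 1).PosSemidef) {ω : Matrix n n ℂ} (hω : ω.PosSemidef) :
    vnEntropy ω ≤ vnEntropy (Φ ω) := by
  have hΦω := (hpos ω hω).isHermitian
  set U := hω.isHermitian.eigenvectorUnitary
  set V := hΦω.eigenvectorUnitary
  have heig : hΦω.eigenvalues = transitionMatrix Φ U V *ᵥ hω.isHermitian.eigenvalues := by
    funext i
    rw [← re_conjStarAlgAut_map_conjStarAlgAut_diagonal_apply, ← hω.isHermitian.spectral_theorem,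
      hΦω.conjStarAlgAut_star_eigenvectorUnitary]
    simp
  rw [hω.isHermitian.vnEntropy_eq_sum_negMulLog, hΦω.vnEntropy_eq_sum_negMulLog, heig]
  exact sum_negMulLog_le_sum_negMulLog_mulVec _ (transitionMatrix_nonneg Φ U V hpos)
    (sum_col_transitionMatrix Φ U V hTP) (sum_row_transitionMatrix_le Φ U V hsub)
    _ hω.eigenvalues_nonneg

lemma vnEntropy_kronecker {a c : Type*} [Fintype a] [DecidableEq a] [Fintype c] [DecidableEq c]
    {ρ : Matrix a a ℂ} {θ : Matrix c c ℂ} (hρ : ρ.IsHermitian) (hθ : θ.IsHermitian)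
    (hρ1 : ρ.trace = 1) (hθ1 : θ.trace = 1) :
    vnEntropy (ρ ⊗ₖ θ) = vnEntropy ρ + vnEntropy θ := by
  have hρθ : (ρ ⊗ₖ θ).IsHermitian := by
    rw [IsHermitian, conjTranspose_kronecker, hρ.eq, hθ.eq]
  let W : unitaryGroup (a × c) ℂ :=
    ⟨_, kronecker_mem_unitary hρ.eigenvectorUnitary.2 hθ.eigenvectorUnitary.2⟩
  have hspec : ρ ⊗ₖ θ = conjStarAlgAut ℂ _ W
      (diagonal (RCLike.ofReal ∘ fun p => hρ.eigenvalues p.1 * hθ.eigenvalues p.2)) := by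
    conv_lhs => rw [hρ.spectral_theorem, hθ.spectral_theorem]
    simp only [conjStarAlgAut_apply, W, star_eq_conjTranspose, conjTranspose_kronecker,
      mul_kronecker_mul, diagonal_kronecker_diagonal]
    congr
    funext p
    simp
  rw [hρθ.vnEntropy_eq_sum_negMulLog, hρθ.sum_comp_eigenvalues_eq W _ hspec,
    Fintype.sum_prod_type, hρ.vnEntropy_eq_sum_negMulLog, hθ.vnEntropy_eq_sum_negMulLog]
  exact sum_sum_negMulLog_mul (hρ.sum_eigenvalues_eq_one hρ1) (hθ.sum_eigenvalues_eq_one hθ1)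

theorem stmt_16_general {A B C : Type*} [Fintype A] [DecidableEq A] [Fintype B] [DecidableEq B]
    [Fintype C] [DecidableEq C]
    (F : Matrix (A × C) (A × C) ℂ →ₗ[ℂ] Matrix B B ℂ)
    (E : Matrix A A ℂ → Matrix B B ℂ)
    (θ : Matrix C C ℂ) (hθ : θ.PosDef) (hθ1 : Matrix.trace θ = 1)
    (hE : ∀ ρ : Matrix A A ℂ, E ρ = F (ρ ⊗ₖ θ))
    (hFpos : ∀ ω : Matrix (A × C) (A × C) ℂ, ω.PosSemidef → (F ω).PosSemidef)
    (hFTP : ∀ ω : Matrix (A × C) (A × C) ℂ, Matrix.trace (F ω) = Matrix.trace ω)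
    (hFsub : ((1 : Matrix B B ℂ) - F 1).PosSemidef)
    (ρ : Matrix A A ℂ) (hρ : ρ.PosDef) (hρ1 : Matrix.trace ρ = 1) :
    vnEntropy (E ρ) - vnEntropy ρ ≥ vnEntropy θ := by
  have hmono := vnEntropy_le_vnEntropy_map F hFpos hFTP hFsub
    (hρ.posSemidef.kronecker hθ.posSemidef)
  rw [vnEntropy_kronecker hρ.isHermitian hθ.isHermitian hρ1 hθ1] at hmono
  rw [hE ρ]
  linarith

theorem stmt_16 {A B C : Type*} [Fintype A] [DecidableEq A] [Fintype B] [DecidableEq B]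
    [Fintype C] [DecidableEq C]
    (F : Matrix (A × C) (A × C) ℂ →ₗ[ℂ] Matrix B B ℂ)
    (E : Matrix A A ℂ → Matrix B B ℂ)
    (θ : Matrix C C ℂ) (hθ : θ.PosDef) (hθ1 : Matrix.trace θ = 1)
    (hE : ∀ ρ : Matrix A A ℂ, E ρ = F (ρ ⊗ₖ θ))
    (hFpos : ∀ ω : Matrix (A × C) (A × C) ℂ, ω.PosSemidef → (F ω).PosSemidef)
    (hFTP : ∀ ω : Matrix (A × C) (A × C) ℂ, Matrix.trace (F ω) = Matrix.trace ω)
    (hFsub : ((1 : Matrix B B ℂ) - F 1).PosSemidef)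
    (ρ : Matrix A A ℂ) (hρ : ρ.PosDef) (hρ1 : Matrix.trace ρ = 1)
    (hωpd : (ρ ⊗ₖ θ).PosDef) (hEρ : (E ρ).PosDef) :
    vnEntropy (E ρ) - vnEntropy ρ ≥ vnEntropy θ :=
  stmt_16_general F E θ hθ hθ1 hE hFpos hFTP hFsub ρ hρ hρ1
end
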